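/- arXiv:2209.15140 — 4 statements merged into one kernel-verified Lean document; each statement's English description precedes it below -/
import Mathlib

section
/- If f_u satisfies the group-affine property f_u(X₁X₂) = f_u(X₁)X₂ + X₁f_u(X₂) − X₁f_u(I)X₂ for all X₁, X₂ in a matrix group G, and X̂ and X are two trajectories both satisfying dX/dt = f_u(X), then the right-invariant error η = X̂X⁻¹ satisfies dη/dt = f_u(η) − η f_u(I). -/
/-!
Write `η = X̂ X⁻¹`. Since `X(s)X(s)⁻¹ = 1` and `X(t)⁻¹X(t) = 1`, the difference quotients satisfy
`η(s) - η(t) = (X̂(s) - X̂(t) - η(t) (X(s) - X(t))) X(s)⁻¹`, so by continuity of matrix inversion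
`η̇ = (f(X̂) - η f(X)) X⁻¹`. Applying the group-affine identity to the product `X̂ = η X` turns
this into `f(η) - η f(I)`.
-/

open Matrix Filter Topology

attribute [local instance] Matrix.normedAddCommGroup Matrix.normedSpace

def IsGroupAffine {R : Type*} [Ring R] (G : Set R) (f : R → R) : Prop :=
  ∀ X₁ ∈ G, ∀ X₂ ∈ G, f (X₁ * X₂) = f X₁ * X₂ + X₁ * f X₂ - X₁ * f 1 * X₂

theorem IsGroupAffine.map_mul_inverse_sub {R : Type*} [Ring R] {G : Set R} {f : R → R}
    (hf : IsGroupAffine G f) {A B : R} (hB : IsUnit B) (hBG : B ∈ G)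
    (hABG : A * Ring.inverse B ∈ G) :
    f (A * Ring.inverse B) - A * Ring.inverse B * f 1 =
      (f A - A * Ring.inverse B * f B) * Ring.inverse B := by
  have h := hf _ hABG _ hBG
  rw [mul_assoc, Ring.inverse_mul_cancel B hB, mul_one] at h
  rw [h]
  simp only [add_mul, sub_mul, mul_assoc, Ring.mul_inverse_cancel B hB, mul_one]
  abel

section MatrixCalculus

variable {𝕜 m : Type*} [NontriviallyNormedField 𝕜] [Fintype m] [DecidableEq m]

theorem Matrix.continuousAt_inv {A : Matrix m m 𝕜} (hA : IsUnit A) : ContinuousAt Inv.inv A := by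
  refine continuousAt_matrix_inv A ?_
  rw [Ring.inverse_eq_inv']
  exact continuousAt_inv₀ ((isUnit_iff_isUnit_det A).1 hA).ne_zero

theorem ContinuousAt.eventually_isUnit_matrix {α : Type*} [TopologicalSpace α]
    {y : α → Matrix m m 𝕜} {a : α} (hy : ContinuousAt y a) (ha : IsUnit (y a)) :
    ∀ᶠ s in 𝓝 a, IsUnit (y s) := by
  have hdet : ContinuousAt (fun s => (y s).det) a :=
    continuous_id.matrix_det.continuousAt.comp hy
  filter_upwards [hdet.eventually_ne ((isUnit_iff_isUnit_det _).1 ha).ne_zero] with s hs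
  exact (isUnit_iff_isUnit_det _).2 hs.isUnit

-- The entrywise sup norm on matrices is not submultiplicative, so instead of the product rule of
-- normed algebras we argue with difference quotients, which only involve the topology.
theorem HasDerivAt.matrix_mul_inv {x y : 𝕜 → Matrix m m 𝕜} {x' y' : Matrix m m 𝕜} {t : 𝕜}
    (hx : HasDerivAt x x' t) (hy : HasDerivAt y y' t) (ht : IsUnit (y t)) :
    HasDerivAt (fun s => x s * (y s)⁻¹) ((x' - x t * (y t)⁻¹ * y') * (y t)⁻¹) t := by
  have hslope : slope (fun s => x s * (y s)⁻¹) t =ᶠ[𝓝[≠] t]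
      fun s => (slope x t s - x t * (y t)⁻¹ * slope y t s) * (y s)⁻¹ := by
    filter_upwards [nhdsWithin_le_nhds (hy.continuousAt.eventually_isUnit_matrix ht)] with s hs
    have hs' : y s * (y s)⁻¹ = 1 := mul_nonsing_inv _ ((isUnit_iff_isUnit_det _).1 hs)
    have ht' : (y t)⁻¹ * y t = 1 := nonsing_inv_mul _ ((isUnit_iff_isUnit_det _).1 ht)
    simp only [slope_def_module]
    rw [mul_smul_comm, ← smul_sub, smul_mul_assoc]
    congr 1
    calc x s * (y s)⁻¹ - x t * (y t)⁻¹
        = x s * (y s)⁻¹ - x t * (y s)⁻¹ - x t * (y t)⁻¹ * (y s * (y s)⁻¹)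
          + x t * ((y t)⁻¹ * y t) * (y s)⁻¹ := by rw [hs', ht']; noncomm_ring
      _ = _ := by noncomm_ring
  have hinv : Tendsto (fun s => (y s)⁻¹) (𝓝[≠] t) (𝓝 (y t)⁻¹) :=
    ((Matrix.continuousAt_inv ht).comp hy.continuousAt).mono_left nhdsWithin_le_nhds
  -- Restated for the topology instance of `Matrix`, which is the one carrying `ContinuousMul`.
  have hx' : Tendsto (slope x t) (𝓝[≠] t) (𝓝 x') := hx.tendsto_slope
  have hy' : Tendsto (slope y t) (𝓝[≠] t) (𝓝 y') := hy.tendsto_slope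
  refine hasDerivAt_iff_tendsto_slope.2 ((tendsto_congr' hslope).2 ?_)
  exact (hx'.sub (hy'.const_mul _)).mul hinv

end MatrixCalculus

theorem t2_general {n : ℕ} (G : Set (Matrix (Fin n) (Fin n) ℝ))
    (f : Matrix (Fin n) (Fin n) ℝ → Matrix (Fin n) (Fin n) ℝ)
    (hf : ∀ X₁ ∈ G, ∀ X₂ ∈ G, f (X₁ * X₂) = f X₁ * X₂ + X₁ * f X₂ - X₁ * f 1 * X₂)
    (Xhat X : ℝ → Matrix (Fin n) (Fin n) ℝ)
    (hXG : ∀ t, X t ∈ G)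
    (hXinv : ∀ t, IsUnit (X t))
    (hηG : ∀ t, Xhat t * (X t)⁻¹ ∈ G)
    (hXhat' : ∀ t, HasDerivAt Xhat (f (Xhat t)) t)
    (hX' : ∀ t, HasDerivAt X (f (X t)) t) :
    ∀ t, HasDerivAt (fun s => Xhat s * (X s)⁻¹)
      (f (Xhat t * (X t)⁻¹) - (Xhat t * (X t)⁻¹) * f 1) t := by
  intro t
  have hquot := IsGroupAffine.map_mul_inverse_sub hf (hXinv t) (hXG t)
    (by simpa only [nonsing_inv_eq_ringInverse] using hηG t)
  simp only [← nonsing_inv_eq_ringInverse] at hquot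
  rw [hquot]
  exact (hXhat' t).matrix_mul_inv (hX' t) (hXinv t)

/-- If `f` is group affine on a matrix group `G` and `X̂, X` are two trajectories of
`dX/dt = f(X)` in `G`, then the right-invariant error `η = X̂ X⁻¹` satisfies the
autonomous equation `dη/dt = f(η) − η f(I)`. -/
theorem t2 {n : ℕ} (G : Set (Matrix (Fin n) (Fin n) ℝ))
    (f : Matrix (Fin n) (Fin n) ℝ → Matrix (Fin n) (Fin n) ℝ)
    (hf : ∀ X₁ ∈ G, ∀ X₂ ∈ G, f (X₁ * X₂) = f X₁ * X₂ + X₁ * f X₂ - X₁ * f 1 * X₂)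
    (Xhat X : ℝ → Matrix (Fin n) (Fin n) ℝ)
    (hXhatG : ∀ t, Xhat t ∈ G) (hXG : ∀ t, X t ∈ G)
    (hXinv : ∀ t, IsUnit (X t)) (hXinvG : ∀ t, (X t)⁻¹ ∈ G)
    (hηG : ∀ t, Xhat t * (X t)⁻¹ ∈ G)
    (hXhat' : ∀ t, HasDerivAt Xhat (f (Xhat t)) t)
    (hX' : ∀ t, HasDerivAt X (f (X t)) t) :
    ∀ t, HasDerivAt (fun s => Xhat s * (X s)⁻¹)
      (f (Xhat t * (X t)⁻¹) - (Xhat t * (X t)⁻¹) * f 1) t :=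
  t2_general G f hf Xhat X hXG hXinv hηG hXhat' hX'
end

section
/- The IMU-slip dynamics f(X) defined on SE₃(3) by f(X) = [[Rω^, Ra+g, v, −αu],[0,0,0,0 blocks]] for X = [[R, v, p, u],[0 block, I₃]] satisfies the group-affine property: f(X₁X₂) = f(X₁)X₂ + X₁f(X₂) − X₁f(I)X₂ for all X₁, X₂ ∈ SE₃(3). -/
open Matrix
noncomputable def skew (w : Fin 3 → ℝ) : Matrix (Fin 3) (Fin 3) ℝ :=
  !![0, -w 2, w 1; w 2, 0, -w 0; -w 1, w 0, 0]
noncomputable def cols3 (v p u : Fin 3 → ℝ) : Matrix (Fin 3) (Fin 3) ℝ :=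
  Matrix.of fun i j => ![v, p, u] j i
noncomputable def SE3mk (R : Matrix (Fin 3) (Fin 3) ℝ) (v p u : Fin 3 → ℝ) :
    Matrix (Fin 3 ⊕ Fin 3) (Fin 3 ⊕ Fin 3) ℝ :=
  Matrix.fromBlocks R (cols3 v p u) 0 1
def SO3 : Set (Matrix (Fin 3) (Fin 3) ℝ) := {R | R * Rᵀ = 1 ∧ R.det = 1}
/-- the rotation block of `X ∈ SE₃(3)` -/
def Rof (X : Matrix (Fin 3 ⊕ Fin 3) (Fin 3 ⊕ Fin 3) ℝ) : Matrix (Fin 3) (Fin 3) ℝ :=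
  fun i j => X (Sum.inl i) (Sum.inl j)
def vof (X : Matrix (Fin 3 ⊕ Fin 3) (Fin 3 ⊕ Fin 3) ℝ) : Fin 3 → ℝ :=
  fun i => X (Sum.inl i) (Sum.inr 0)
def uof (X : Matrix (Fin 3 ⊕ Fin 3) (Fin 3 ⊕ Fin 3) ℝ) : Fin 3 → ℝ :=
  fun i => X (Sum.inl i) (Sum.inr 2)
/-- The IMU–slip dynamics `f(X) = [[Rω̂, Ra+g, v, −αu],[0]]`. -/
noncomputable def fimu (ω a g : Fin 3 → ℝ) (α : ℝ)
    (X : Matrix (Fin 3 ⊕ Fin 3) (Fin 3 ⊕ Fin 3) ℝ) :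
    Matrix (Fin 3 ⊕ Fin 3) (Fin 3 ⊕ Fin 3) ℝ :=
  Matrix.fromBlocks (Rof X * skew ω)
    (cols3 (Rof X *ᵥ a + g) (vof X) ((-α) • uof X)) 0 0
/-- The IMU–slip dynamics is group affine on `SE₃(3)`. -/
theorem t3 (ω a g : Fin 3 → ℝ) (α : ℝ)
    (R₁ R₂ : Matrix (Fin 3) (Fin 3) ℝ) (v₁ p₁ u₁ v₂ p₂ u₂ : Fin 3 → ℝ)
    (hR₁ : R₁ ∈ SO3) (hR₂ : R₂ ∈ SO3) :
    fimu ω a g α (SE3mk R₁ v₁ p₁ u₁ * SE3mk R₂ v₂ p₂ u₂) =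
      fimu ω a g α (SE3mk R₁ v₁ p₁ u₁) * SE3mk R₂ v₂ p₂ u₂ +
      SE3mk R₁ v₁ p₁ u₁ * fimu ω a g α (SE3mk R₂ v₂ p₂ u₂) -
      SE3mk R₁ v₁ p₁ u₁ * fimu ω a g α 1 * SE3mk R₂ v₂ p₂ u₂ := by
  ext i j
  cases i <;> cases j <;>
  · simp [fimu, SE3mk, Rof, vof, uof, cols3, skew, Matrix.mul_apply, Matrix.mulVec,
      Matrix.fromBlocks, Matrix.one_apply, dotProduct, Fintype.sum_sum_type,
      Fin.sum_univ_three, Fin.forall_fin_succ, Matrix.sub_apply, Matrix.add_apply] <;>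
    rename_i i j <;> fin_cases i <;> fin_cases j <;>
    simp [Fin.sum_univ_three, Matrix.vecHead, Matrix.vecTail] <;> ring
end

section
/- For the measurement Jacobian H = [0₃, I₃, 0₃, I₃] and state transition Φ = [[I,0,0,0],[g^Δt,I,0,0],[(1/2)g^Δt², IΔt, I, 0],[0,0,0,e^{−αΔt}I]] with g = (0,0,−g₀)ᵀ, g₀ ≠ 0, α ≠ 0, Δt ≠ 0, the unobservable subspace (the kernel of the stacked observability matrix with rows HΦᵏ, k ≥ 0) is exactly 4-dimensional: it consists of vectors (ξ_R, ξ_v, ξ_p, ξ_u) with ξ_p ∈ ℝ³ arbitrary, ξ_v = 0, ξ_u = 0, and ξ_R parallel to g. -/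
open Matrix
/-- The discrete state transition matrix `Φ` (3×3 blocks):
`[[I,0,0,0],[g^Δt,I,0,0],[(1/2)g^Δt², IΔt, I, 0],[0,0,0,e^{−αΔt}I]]`. -/
noncomputable def Phi (g : Fin 3 → ℝ) (α Δt : ℝ) :
    Matrix ((Fin 3 ⊕ Fin 3) ⊕ (Fin 3 ⊕ Fin 3)) ((Fin 3 ⊕ Fin 3) ⊕ (Fin 3 ⊕ Fin 3)) ℝ :=
  Matrix.fromBlocks
    (Matrix.fromBlocks 1 0 (Δt • skew g) 1) 0
    (Matrix.fromBlocks ((Δt ^ 2 / 2) • skew g) (Δt • 1) 0 0)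
    (Matrix.fromBlocks 1 0 0 (Real.exp (-α * Δt) • 1))
/-- The measurement Jacobian `H = [0₃, I₃, 0₃, I₃]`. -/
noncomputable def Hmat : Matrix (Fin 3) ((Fin 3 ⊕ Fin 3) ⊕ (Fin 3 ⊕ Fin 3)) ℝ :=
  Matrix.fromCols (Matrix.fromCols 0 1) (Matrix.fromCols 0 1)

/-!
`Φ` is block lower triangular, so its powers act on `ξ = (ξ_R, ξ_v, ξ_p, ξ_u)` by keeping `ξ_R`,
adding `k Δt (g × ξ_R)` to `ξ_v` and scaling `ξ_u` by `eᵏ`, where `e = exp (-α Δt)`. Hence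
`H Φᵏ ξ = k Δt (g × ξ_R) + ξ_v + eᵏ ξ_u`. Since `e ≠ 1`, the sequences `k`, `1`, `eᵏ` are linearly
independent (already on `k = 0, 1, 2`), so the whole stack vanishes iff `g × ξ_R = ξ_v = ξ_u = 0`,
and `g × ξ_R = 0` means `ξ_R ∥ g`.
-/

theorem skew_mulVec (w v : Fin 3 → ℝ) : skew w *ᵥ v = w ⨯₃ v := by
  ext i
  fin_cases i <;> simp [skew, cross_apply, mulVec, dotProduct, Fin.sum_univ_three] <;> ring

theorem cross_eq_zero_iff_exists_smul {R : Type*} [Field R] [LinearOrder R]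
    [IsStrictOrderedRing R] {w : Fin 3 → R} (hw : w ≠ 0) (v : Fin 3 → R) :
    w ⨯₃ v = 0 ↔ ∃ c : R, v = c • w := by
  constructor
  · intro h
    have hww : w ⬝ᵥ w ≠ 0 := dotProduct_self_eq_zero.not.mpr hw
    have h2 : (w ⬝ᵥ v) • w - (w ⬝ᵥ w) • v = 0 := by
      rw [← cross_cross_eq_smul_sub_smul', h, map_zero]
    refine ⟨(w ⬝ᵥ w)⁻¹ * (w ⬝ᵥ v), ?_⟩
    rw [mul_smul, sub_eq_zero.mp h2, smul_smul, inv_mul_cancel₀ hww, one_smul]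
  · rintro ⟨c, rfl⟩
    rw [map_smul, cross_self, smul_zero]

theorem forall_natCast_smul_add_add_pow_smul_eq_zero_iff {K V : Type*} [Field K]
    [AddCommGroup V] [Module K V] {e : K} (he : e ≠ 1) (x y z : V) :
    (∀ k : ℕ, (k : K) • x + y + e ^ k • z = 0) ↔ x = 0 ∧ y = 0 ∧ z = 0 := by
  constructor
  · intro h
    have h0 := h 0
    have h1 := h 1
    have h2 := h 2
    simp only [Nat.cast_zero, Nat.cast_one, Nat.cast_ofNat, zero_smul, one_smul, pow_zero,
      pow_one, zero_add] at h0 h1 h2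
    -- second difference in `k` kills `x` and `y`
    have hz : (e - 1) ^ 2 • z = 0 := by
      linear_combination (norm := module) h2 - (2 : K) • h1 + h0
    have hz0 : z = 0 := (smul_eq_zero.mp hz).resolve_left (pow_ne_zero 2 (sub_ne_zero.mpr he))
    have hy0 : y = 0 := by simpa [hz0] using h0
    exact ⟨by simpa [hy0, hz0] using h1, hy0, hz0⟩
  · rintro ⟨rfl, rfl, rfl⟩ k
    simp

section Iterates

variable (g : Fin 3 → ℝ) (α Δt : ℝ) (a b c d : Fin 3 → ℝ)

theorem Phi_mulVec_sumElim :
    Phi g α Δt *ᵥ Sum.elim (Sum.elim a b) (Sum.elim c d) =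
      Sum.elim (Sum.elim a (Δt • (skew g *ᵥ a) + b))
        (Sum.elim ((Δt ^ 2 / 2) • (skew g *ᵥ a) + Δt • b + c) (Real.exp (-α * Δt) • d)) := by
  simp only [Phi, fromBlocks_mulVec, Sum.elim_comp_inl, Sum.elim_comp_inr, one_mulVec,
    zero_mulVec, smul_mulVec, add_zero, zero_add]
  simp [← Sum.elim_add_add]

theorem Hmat_mulVec_sumElim : Hmat *ᵥ Sum.elim (Sum.elim a b) (Sum.elim c d) = b + d := by
  simp [Hmat]

theorem exists_Phi_pow_mulVec_sumElim (k : ℕ) :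
    ∃ p : Fin 3 → ℝ, Phi g α Δt ^ k *ᵥ Sum.elim (Sum.elim a b) (Sum.elim c d) =
      Sum.elim (Sum.elim a ((k : ℝ) • (Δt • (skew g *ᵥ a)) + b))
        (Sum.elim p (Real.exp (-α * Δt) ^ k • d)) := by
  induction k with
  | zero => exact ⟨c, by simp⟩
  | succ k ih =>
    obtain ⟨p, hp⟩ := ih
    refine ⟨(Δt ^ 2 / 2) • (skew g *ᵥ a) + Δt • ((k : ℝ) • (Δt • (skew g *ᵥ a)) + b) + p, ?_⟩
    rw [pow_succ', ← mulVec_mulVec, hp, Phi_mulVec_sumElim, pow_succ' (Real.exp _),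
      mul_smul (Real.exp _)]
    congr 2
    push_cast
    module

theorem Hmat_mulVec_Phi_pow_mulVec_sumElim (k : ℕ) :
    Hmat *ᵥ (Phi g α Δt ^ k *ᵥ Sum.elim (Sum.elim a b) (Sum.elim c d)) =
      (k : ℝ) • (Δt • (skew g *ᵥ a)) + b + Real.exp (-α * Δt) ^ k • d := by
  obtain ⟨p, hp⟩ := exists_Phi_pow_mulVec_sumElim g α Δt a b c d k
  rw [hp, Hmat_mulVec_sumElim, add_assoc]

end Iterates

/-- The unobservable subspace (kernel of the stacked observability matrix) is exactly:
`ξ_v = 0`, `ξ_u = 0`, `ξ_R` parallel to `g`, and `ξ_p` arbitrary. -/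
theorem t6 (g₀ α Δt : ℝ) (hg₀ : g₀ ≠ 0) (hα : α ≠ 0) (hΔt : Δt ≠ 0)
    (g : Fin 3 → ℝ) (hg : g = ![0, 0, -g₀])
    (ξ : (Fin 3 ⊕ Fin 3) ⊕ (Fin 3 ⊕ Fin 3) → ℝ) :
    (∀ k : ℕ, Hmat *ᵥ ((Phi g α Δt) ^ k *ᵥ ξ) = 0) ↔
      ((fun i => ξ (Sum.inl (Sum.inr i))) = 0 ∧
       (fun i => ξ (Sum.inr (Sum.inr i))) = 0 ∧
       ∃ c : ℝ, (fun i => ξ (Sum.inl (Sum.inl i))) = c • g) := by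
  obtain ⟨a, b, c, d, rfl⟩ : ∃ a b c d : Fin 3 → ℝ, ξ = Sum.elim (Sum.elim a b) (Sum.elim c d) :=
    ⟨_, _, _, _, by ext ((i | i) | (i | i)) <;> rfl⟩
  have hg_ne : g ≠ 0 := fun h => hg₀ (by simpa using congrFun (hg.symm.trans h) 2)
  have he : Real.exp (-α * Δt) ≠ 1 :=
    Real.exp_eq_one_iff _ |>.not.mpr (mul_ne_zero (neg_ne_zero.mpr hα) hΔt)
  simp only [Hmat_mulVec_Phi_pow_mulVec_sumElim,
    forall_natCast_smul_add_add_pow_smul_eq_zero_iff he, smul_eq_zero, hΔt, false_or,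
    skew_mulVec, cross_eq_zero_iff_exists_smul hg_ne, Sum.elim_inl, Sum.elim_inr]
  tauto
end

section
/- Log-linear error property for the slip system: if ξ(t) solves ξ̇ = Aξ with A = [[0,0,0,0],[g^,0,0,0],[0,I,0,0],[0,0,0,−αI]], and η(t) = exp(ξ(t)^∧) where ^∧ : ℝ¹² → se₃(3) is the Lie algebra isomorphism, then η(t) solves the nonlinear invariant error equation dη/dt = f(η) − ηf(I) for the deterministic IMU-slip dynamics f defined on SE₃(3). -/
open Matrix
attribute [local instance] Matrix.normedAddCommGroup Matrix.normedSpace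
/-- The hat map `ℝ¹² → se₃(3)`. -/
noncomputable def hat (ξ : (Fin 3 ⊕ Fin 3) ⊕ (Fin 3 ⊕ Fin 3) → ℝ) :
    Matrix (Fin 3 ⊕ Fin 3) (Fin 3 ⊕ Fin 3) ℝ :=
  Matrix.fromBlocks (skew fun i => ξ (Sum.inl (Sum.inl i)))
    (cols3 (fun i => ξ (Sum.inl (Sum.inr i))) (fun i => ξ (Sum.inr (Sum.inl i)))
      (fun i => ξ (Sum.inr (Sum.inr i)))) 0 0
/-- The linearized error dynamics matrix `A`. -/
noncomputable def Amat (g : Fin 3 → ℝ) (α : ℝ) :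
    Matrix ((Fin 3 ⊕ Fin 3) ⊕ (Fin 3 ⊕ Fin 3)) ((Fin 3 ⊕ Fin 3) ⊕ (Fin 3 ⊕ Fin 3)) ℝ :=
  Matrix.fromBlocks (Matrix.fromBlocks 0 0 (skew g) 0) 0
    (Matrix.fromBlocks 0 1 0 0) (Matrix.fromBlocks 0 0 0 ((-α) • 1))

/-
The rotational coordinates of `ξ` are constant, because the first block row of `A` vanishes, so
`ξ(s)^∧ = [[ŵ, B(s)], [0, 0]]` with `ŵ` fixed. For such block matrices
`exp [[S, B], [0, 0]] = [[exp S, J(S) B], [0, I]]` with `J(S) = ∑ Sⁿ / (n+1)!`, which is affine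
in `B`; hence `η̇ = [[0, J(ŵ) Ḃ], [0, 0]]`. Comparing with `f(η) - η f(I)` column by column, the
only nontrivial column is the velocity one, where `ĝ w = -ŵ g` and `J(ŵ) ŵ = exp ŵ - I` give
`J(ŵ) ĝ w = g - exp(ŵ) g`.
-/

open NormedSpace
open scoped Nat

theorem HasSum.matrix_fromBlocks {X l m n o R : Type*} [AddCommMonoid R] [TopologicalSpace R]
    {fA : X → Matrix n l R} {fB : X → Matrix n m R} {fC : X → Matrix o l R}
    {fD : X → Matrix o m R} {A : Matrix n l R} {B : Matrix n m R} {C : Matrix o l R}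
    {D : Matrix o m R} (hA : HasSum fA A) (hB : HasSum fB B) (hC : HasSum fC C)
    (hD : HasSum fD D) :
    HasSum (fun x => fromBlocks (fA x) (fB x) (fC x) (fD x)) (fromBlocks A B C D) := by
  refine Pi.hasSum.2 fun i => Pi.hasSum.2 fun j => ?_
  rcases i with i | i <;> rcases j with j | j
  exacts [Pi.hasSum.1 (Pi.hasSum.1 hA i) j, Pi.hasSum.1 (Pi.hasSum.1 hB i) j,
    Pi.hasSum.1 (Pi.hasSum.1 hC i) j, Pi.hasSum.1 (Pi.hasSum.1 hD i) j]

/-- The power series of `(exp x - 1) / x`; for `x = ŵ` it is the left Jacobian of `SO(3)`. -/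
noncomputable def expSubOneDiv {𝔸 : Type*} [Ring 𝔸] [Algebra ℝ 𝔸] [TopologicalSpace 𝔸]
    (x : 𝔸) : 𝔸 :=
  ∑' n : ℕ, ((n + 1)! : ℝ)⁻¹ • x ^ n

section NormedAlgebra

variable {𝔸 : Type*} [NormedRing 𝔸] [NormedAlgebra ℝ 𝔸] [CompleteSpace 𝔸]

theorem hasSum_expSubOneDiv (x : 𝔸) :
    HasSum (fun n : ℕ => ((n + 1)! : ℝ)⁻¹ • x ^ n) (expSubOneDiv x) := by
  refine Summable.hasSum <| .of_norm_bounded (norm_expSeries_summable' (𝕂 := ℝ) x) fun n => ?_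
  rw [norm_smul, norm_smul]
  gcongr
  simpa using inv_anti₀ (by positivity) (Nat.cast_le.2 (Nat.factorial_le n.le_succ))

theorem hasSum_exp_sub_one (x : 𝔸) :
    HasSum (fun n : ℕ => ((n + 1)! : ℝ)⁻¹ • x ^ (n + 1)) (exp x - 1) := by
  simpa using (hasSum_nat_add_iff' 1).2 (exp_series_hasSum_exp' (𝕂 := ℝ) x)

theorem expSubOneDiv_mul_self (x : 𝔸) : expSubOneDiv x * x = exp x - 1 :=
  ((hasSum_expSubOneDiv x).mul_right x).unique <| by
    simpa only [smul_mul_assoc, ← pow_succ] using hasSum_exp_sub_one x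

end NormedAlgebra

namespace Matrix

/- Matrices carry no canonical norm, so the series lemmas are restated here with the operator
norm confined to their proofs. -/

variable {m n : Type*} [Fintype m] [Fintype n] [DecidableEq m] [DecidableEq n]

theorem hasSum_expSubOneDiv (S : Matrix m m ℝ) :
    HasSum (fun k : ℕ => ((k + 1)! : ℝ)⁻¹ • S ^ k) (expSubOneDiv S) :=
  open scoped Norms.Operator in _root_.hasSum_expSubOneDiv S

theorem hasSum_exp_sub_one (S : Matrix m m ℝ) :
    HasSum (fun k : ℕ => ((k + 1)! : ℝ)⁻¹ • S ^ (k + 1)) (exp S - 1) :=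
  open scoped Norms.Operator in _root_.hasSum_exp_sub_one S

theorem expSubOneDiv_mul_self (S : Matrix m m ℝ) : expSubOneDiv S * S = exp S - 1 :=
  open scoped Norms.Operator in _root_.expSubOneDiv_mul_self S

theorem fromBlocks_zero_zero_pow_succ {α : Type*} [Semiring α] (S : Matrix m m α)
    (B : Matrix m n α) (k : ℕ) :
    (fromBlocks S B 0 0 : Matrix (m ⊕ n) (m ⊕ n) α) ^ (k + 1) =
      fromBlocks (S ^ (k + 1)) (S ^ k * B) 0 0 := by
  induction k with
  | zero => simp
  | succ k ih => rw [pow_succ, ih, fromBlocks_multiply]; simp [pow_succ]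

theorem exp_fromBlocks_zero_zero (S : Matrix m m ℝ) (B : Matrix m n ℝ) :
    exp (fromBlocks S B 0 0 : Matrix (m ⊕ n) (m ⊕ n) ℝ) =
      fromBlocks (exp S) (expSubOneDiv S * B) 0 1 := by
  have hB : HasSum (fun k : ℕ => ((k + 1)! : ℝ)⁻¹ • (S ^ k * B)) (expSubOneDiv S * B) := by
    have := (hasSum_expSubOneDiv S).map
      (AddMonoidHom.mk' (fun M : Matrix m m ℝ => M * B) fun _ _ => Matrix.add_mul _ _ _)
      (continuous_id.matrix_mul continuous_const)
    simpa only [Function.comp_def, AddMonoidHom.mk'_apply, Matrix.smul_mul] using this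
  have h : exp (fromBlocks S B 0 0 : Matrix (m ⊕ n) (m ⊕ n) ℝ) - 1 =
      fromBlocks (exp S - 1) (expSubOneDiv S * B) 0 0 := by
    refine (hasSum_exp_sub_one _).unique ?_
    simp only [fromBlocks_zero_zero_pow_succ, fromBlocks_smul, smul_zero]
    exact (hasSum_exp_sub_one S).matrix_fromBlocks hB hasSum_zero hasSum_zero
  rw [sub_eq_iff_eq_add.1 h, ← fromBlocks_one, fromBlocks_add]
  simp

theorem hasDerivAt_exp_fromBlocks_zero_zero (S : Matrix m m ℝ) {B : ℝ → Matrix m n ℝ}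
    {B' : Matrix m n ℝ} {t : ℝ} (hB : HasDerivAt B B' t) :
    HasDerivAt (fun s => exp (fromBlocks S (B s) 0 0 : Matrix (m ⊕ n) (m ⊕ n) ℝ))
      (fromBlocks 0 (expSubOneDiv S * B') 0 0) t := by
  simp only [exp_fromBlocks_zero_zero]
  refine hasDerivAt_pi.2 fun i => hasDerivAt_pi.2 fun j => ?_
  rcases i with i | i <;> rcases j with j | j
  case inl.inr =>
    simp only [fromBlocks_apply₁₂, mul_apply]
    exact HasDerivAt.fun_sum fun k _ => (hasDerivAt_pi.1 (hasDerivAt_pi.1 hB k) j).const_mul _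
  all_goals exact hasDerivAt_const _ _

end Matrix

theorem skew_mulVec_anticomm (g w : Fin 3 → ℝ) : skew g *ᵥ w = -(skew w *ᵥ g) := by
  ext i
  fin_cases i <;> simp [skew, mulVec, dotProduct, Fin.sum_univ_three] <;> ring

theorem mul_cols3 (M : Matrix (Fin 3) (Fin 3) ℝ) (v p u : Fin 3 → ℝ) :
    M * cols3 v p u = cols3 (M *ᵥ v) (M *ᵥ p) (M *ᵥ u) := by
  ext i j
  fin_cases j <;> simp [cols3, mul_apply, mulVec, dotProduct]

theorem cols3_add (v p u v' p' u' : Fin 3 → ℝ) :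
    cols3 v p u + cols3 v' p' u' = cols3 (v + v') (p + p') (u + u') := by
  ext i j
  fin_cases j <;> simp [cols3]

theorem fimu_fromBlocks (ω a g : Fin 3 → ℝ) (α : ℝ) (R : Matrix (Fin 3) (Fin 3) ℝ)
    (v p u : Fin 3 → ℝ) :
    fimu ω a g α (fromBlocks R (cols3 v p u) 0 1) =
      fromBlocks (R * skew ω) (cols3 (R *ᵥ a + g) v ((-α) • u)) 0 0 :=
  rfl

theorem fimu_one (ω a g : Fin 3 → ℝ) (α : ℝ) :
    fimu ω a g α 1 = fromBlocks (skew ω) (cols3 (a + g) 0 0) 0 0 := by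
  have h : (1 : Matrix (Fin 3 ⊕ Fin 3) (Fin 3 ⊕ Fin 3) ℝ) = fromBlocks 1 (cols3 0 0 0) 0 1 := by
    rw [← fromBlocks_one]; congr; ext i j; fin_cases j <;> rfl
  rw [h, fimu_fromBlocks]
  simp

theorem fimu_sub_mul_fimu_one {E J : Matrix (Fin 3) (Fin 3) ℝ} {w : Fin 3 → ℝ}
    (hJ : J * skew w = E - 1) (ω a g v p u : Fin 3 → ℝ) (α : ℝ) :
    fimu ω a g α (fromBlocks E (J * cols3 v p u) 0 1) -
        fromBlocks E (J * cols3 v p u) 0 1 * fimu ω a g α 1 =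
      fromBlocks 0 (J * cols3 (skew g *ᵥ w) v ((-α) • u)) 0 0 := by
  have hg : J *ᵥ (skew g *ᵥ w) = g - E *ᵥ g := by
    rw [skew_mulVec_anticomm, mulVec_neg, mulVec_mulVec, hJ, sub_mulVec, one_mulVec, neg_sub]
  rw [mul_cols3, fimu_fromBlocks, fimu_one, fromBlocks_multiply, sub_eq_iff_eq_add,
    fromBlocks_add]
  simp only [Matrix.mul_zero, Matrix.zero_mul, add_zero, zero_add, mul_cols3, mulVec_zero,
    mulVec_add, mulVec_smul, hg, cols3_add]
  congr 2
  abel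

theorem HasDerivAt.cols3 {v p u : ℝ → Fin 3 → ℝ} {v' p' u' : Fin 3 → ℝ} {t : ℝ}
    (hv : HasDerivAt v v' t) (hp : HasDerivAt p p' t) (hu : HasDerivAt u u' t) :
    HasDerivAt (fun s => cols3 (v s) (p s) (u s)) (cols3 v' p' u') t := by
  refine hasDerivAt_pi.2 fun i => hasDerivAt_pi.2 fun j => ?_
  fin_cases j
  exacts [hasDerivAt_pi.1 hv i, hasDerivAt_pi.1 hp i, hasDerivAt_pi.1 hu i]

abbrev Coords := (Fin 3 ⊕ Fin 3) ⊕ (Fin 3 ⊕ Fin 3) → ℝ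

def rotCoord (x : Coords) : Fin 3 → ℝ := x ∘ Sum.inl ∘ Sum.inl

def velCoord (x : Coords) : Fin 3 → ℝ := x ∘ Sum.inl ∘ Sum.inr

def posCoord (x : Coords) : Fin 3 → ℝ := x ∘ Sum.inr ∘ Sum.inl

def slipCoord (x : Coords) : Fin 3 → ℝ := x ∘ Sum.inr ∘ Sum.inr

theorem hat_eq_fromBlocks (x : Coords) :
    hat x = fromBlocks (skew (rotCoord x)) (cols3 (velCoord x) (posCoord x) (slipCoord x)) 0 0 :=
  rfl

theorem rotCoord_Amat_mulVec (g : Fin 3 → ℝ) (α : ℝ) (x : Coords) :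
    rotCoord (Amat g α *ᵥ x) = 0 := by
  ext i; simp [rotCoord, Amat, fromBlocks_mulVec]

theorem velCoord_Amat_mulVec (g : Fin 3 → ℝ) (α : ℝ) (x : Coords) :
    velCoord (Amat g α *ᵥ x) = skew g *ᵥ rotCoord x := by
  ext i; simp [velCoord, rotCoord, Amat, fromBlocks_mulVec, Function.comp_assoc]

theorem posCoord_Amat_mulVec (g : Fin 3 → ℝ) (α : ℝ) (x : Coords) :
    posCoord (Amat g α *ᵥ x) = velCoord x := by
  ext i; simp [posCoord, velCoord, Amat, fromBlocks_mulVec]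

theorem slipCoord_Amat_mulVec (g : Fin 3 → ℝ) (α : ℝ) (x : Coords) :
    slipCoord (Amat g α *ᵥ x) = (-α) • slipCoord x := by
  ext i; simp [slipCoord, Amat, fromBlocks_mulVec, neg_mulVec, smul_mulVec]

/-- Log-linear property of the invariant error: if `ξ̇ = Aξ` then
`η = exp(ξ^∧)` solves `dη/dt = f(η) − η f(I)`. -/
theorem t10 (ω a g : Fin 3 → ℝ) (α : ℝ)
    (ξ : ℝ → ((Fin 3 ⊕ Fin 3) ⊕ (Fin 3 ⊕ Fin 3) → ℝ))
    (hξ : ∀ t, HasDerivAt ξ (Amat g α *ᵥ ξ t) t) :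
    ∀ t, HasDerivAt (fun s => NormedSpace.exp (hat (ξ s)))
      (fimu ω a g α (NormedSpace.exp (hat (ξ t))) -
        NormedSpace.exp (hat (ξ t)) * fimu ω a g α 1) t := by
  intro t
  have hcoord (e : Fin 3 → (Fin 3 ⊕ Fin 3) ⊕ (Fin 3 ⊕ Fin 3)) (r : ℝ) :
      HasDerivAt (fun s => ξ s ∘ e) ((Amat g α *ᵥ ξ r) ∘ e) r :=
    hasDerivAt_pi.2 fun i => hasDerivAt_pi.1 (hξ r) (e i)
  have hrot (s : ℝ) : rotCoord (ξ s) = rotCoord (ξ t) :=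
    is_const_of_deriv_eq_zero (fun r => (hcoord (Sum.inl ∘ Sum.inl) r).differentiableAt)
      (fun r => (hcoord _ r).deriv.trans (rotCoord_Amat_mulVec g α _)) s t
  have hB : HasDerivAt (fun s => cols3 (velCoord (ξ s)) (posCoord (ξ s)) (slipCoord (ξ s)))
      (cols3 (velCoord (Amat g α *ᵥ ξ t)) (posCoord (Amat g α *ᵥ ξ t))
        (slipCoord (Amat g α *ᵥ ξ t))) t :=
    (hcoord _ t).cols3 (hcoord _ t) (hcoord _ t)
  simp only [hat_eq_fromBlocks, hrot]
  convert hasDerivAt_exp_fromBlocks_zero_zero _ hB using 1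
  rw [exp_fromBlocks_zero_zero, fimu_sub_mul_fimu_one (expSubOneDiv_mul_self _),
    velCoord_Amat_mulVec, posCoord_Amat_mulVec, slipCoord_Amat_mulVec]
end
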